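/- For all positive integers k and m there exists a positive integer N (one may take the k-uniform hypergraph Ramsey number R_k(k+1; (k+1)^m)) with the following property: if C ⊆ ℝ^n is a proper convex cone having a proper (K_1 × ⋯ × K_m)-lift where K_1, …, K_m are closed convex cones with ℓ(K_i) ≤ k+1 for each i ∈ [m], and C is k-neighborly with respect to some finite set V ⊆ ext(C), then |V| < N. -/

import Mathlib

open scoped RealInnerProductSpace

/-- A closed convex cone (containing the origin). -/
def IsClosedConvexCone {E : Type*} [AddCommGroup E] [Module ℝ E] [TopologicalSpace E]
    (K : Set E) : Prop :=
  IsClosed K ∧ Convex ℝ K ∧ (0 : E) ∈ K ∧ ∀ x ∈ K, ∀ t : ℝ, 0 ≤ t → t • x ∈ K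

/-- A proper convex cone: closed, pointed, and full-dimensional. -/
def IsProperCone {E : Type*} [AddCommGroup E] [Module ℝ E] [TopologicalSpace E]
    (C : Set E) : Prop :=
  IsClosedConvexCone C ∧ C ∩ (-C) = {0} ∧ Submodule.span ℝ C = ⊤

/-- A face of a convex cone. -/
def IsFace {E : Type*} [AddCommGroup E] [Module ℝ E] (K F : Set E) : Prop :=
  F ⊆ K ∧ Convex ℝ F ∧
    ∀ ⦃x⦄, x ∈ K → ∀ ⦃y⦄, y ∈ K → ∀ ⦃α : ℝ⦄, 0 < α → α < 1 →
      α • x + (1 - α) • y ∈ F → x ∈ F ∧ y ∈ F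

/-- `FaceChainBound K m` says that every chain of nonempty faces of `K` has length at most `m`,
i.e. `ℓ(K) ≤ m`. -/
def FaceChainBound {E : Type*} [AddCommGroup E] [Module ℝ E] (K : Set E) (m : ℕ) : Prop :=
  ∀ (l : ℕ) (F : Fin l → Set E),
    (∀ i, IsFace K (F i) ∧ (F i).Nonempty) →
    (∀ i j : Fin l, i < j → F i ⊂ F j) → l ≤ m

/-- The ray generated by `v`. -/
def rayOf {E : Type*} [AddCommGroup E] [Module ℝ E] (v : E) : Set E :=
  {x | ∃ t : ℝ, 0 ≤ t ∧ x = t • v}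

/-- `v` generates an extreme ray of `K`. -/
def IsExtremeRay {E : Type*} [AddCommGroup E] [Module ℝ E] (K : Set E) (v : E) : Prop :=
  v ∈ K ∧ v ≠ 0 ∧ IsFace K (rayOf v)

/-- The dual cone. -/
def dualCone {E : Type*} [NormedAddCommGroup E] [InnerProductSpace ℝ E] (C : Set E) : Set E :=
  {f | ∀ x ∈ C, 0 ≤ ⟪f, x⟫}

/-- Normalized extreme rays. -/
def extSet {E : Type*} [NormedAddCommGroup E] [InnerProductSpace ℝ E] (C : Set E) : Set E :=
  {v | ‖v‖ = 1 ∧ IsExtremeRay C v}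

/-- `C` is `k`-neighborly with respect to `V ⊆ ext C`. -/
def IsNeighborly {E : Type*} [NormedAddCommGroup E] [InnerProductSpace ℝ E]
    (C : Set E) (k : ℕ) (V : Set E) : Prop :=
  V ⊆ extSet C ∧
    ∀ W ⊆ V, W.Finite → W.ncard = k →
      ∃ f ∈ dualCone C, (∀ v ∈ W, ⟪f, v⟫ = 0) ∧ ∀ v ∈ V \ W, 0 < ⟪f, v⟫

/-!
Lift the points `v ∈ V` to `x v ∈ K₁ × ⋯ × Kₘ ∩ L` and colour each `k`-subset `W ⊆ V` by the
tuple of heights (lengths of longest face chains) of the smallest faces of the `Kᵢ` containing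
the `i`-th coordinates of the lifts of `W`. Hypergraph Ramsey gives a `(k+1)`-set `U` on which
this colour is constant. As heights are at most `k + 1`, the faces of the `k`-subsets of `U`
cannot all be strictly smaller than the face of `U`, so equal heights force all of them to
coincide with the face of `U`. Now take `w ∈ U` and `f ∈ C*` vanishing on `U \ {w}` and positive
at `w`. As the lift is proper, `f ∘ π` extends to a functional `g` that is nonnegative on the
product cone, so `g` splits into functionals `gᵢ ≥ 0` on the `Kᵢ`. Each `gᵢ` vanishes on the
face spanned by the lifts of `U \ {w}`, which contains the lift of `w`; hence `f w = 0`.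
-/

open Finset

universe u v

section Ramsey

variable {α κ : Type*}

def IsMonochromatic (χ : Finset α → κ) (k : ℕ) (B : Finset α) : Prop :=
  ∃ c, ∀ W ⊆ B, #W = k → χ W = c

/-- The colour of a `(k+1)`-subset of `T` depends only on its least element. -/
def IsMinMonochromatic [LinearOrder α] (χ : Finset α → κ) (k : ℕ) (T : Finset α) : Prop :=
  ∀ a ∈ T, ∃ c, ∀ S ⊆ T, #S = k → (∀ b ∈ S, a < b) → χ (insert a S) = c

def IsRamseyBound (k : ℕ) (κ : Type*) (s N : ℕ) : Prop :=
  ∀ ⦃α : Type u⦄ [LinearOrder α] (χ : Finset α → κ) (A : Finset α), N ≤ #A →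
    ∃ B ⊆ A, s ≤ #B ∧ IsMonochromatic χ k B

theorem exists_isMinMonochromatic {k : ℕ} (hR : ∀ s, ∃ N, IsRamseyBound.{u} k κ s N) (t : ℕ) :
    ∃ N, ∀ ⦃α : Type u⦄ [LinearOrder α] (χ : Finset α → κ) (A : Finset α), N ≤ #A →
      ∃ T ⊆ A, #T = t ∧ IsMinMonochromatic χ k T := by
  induction t with
  | zero => exact ⟨0, fun _ _ _ _ _ => ⟨∅, empty_subset _, rfl, by simp [IsMinMonochromatic]⟩⟩
  | succ t ih =>
    obtain ⟨Nt, hNt⟩ := ih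
    obtain ⟨N, hN⟩ := hR Nt
    refine ⟨N + 1, fun α _ χ A hA => ?_⟩
    have hAne : A.Nonempty := card_pos.1 (by omega)
    set a := A.min' hAne
    obtain ⟨B, hBA, hBcard, c, hc⟩ := hN (fun W => χ (insert a W)) (A.erase a)
      (by rw [card_erase_of_mem (A.min'_mem hAne)]; omega)
    obtain ⟨T, hTB, hTcard, hT⟩ := hNt χ B hBcard
    have haT : a ∉ T := fun h => by simpa using hBA (hTB h)
    have ha_lt : ∀ b ∈ T, a < b := fun b hb =>
      (A.min'_le b (mem_of_mem_erase (hBA (hTB hb)))).lt_of_ne (ne_of_mem_erase (hBA (hTB hb))).symm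
    refine ⟨insert a T, insert_subset (A.min'_mem hAne) ((hTB.trans hBA).trans (erase_subset _ _)),
      by rw [card_insert_of_notMem haT, hTcard], ?_⟩
    have hsub : ∀ b, a ≤ b → ∀ S ⊆ insert a T, (∀ x ∈ S, b < x) → S ⊆ T := fun b hab S hS hbS =>
      (subset_insert_iff_of_notMem fun haS => (hab.trans_lt (hbS a haS)).false).1 hS
    intro b hb
    rcases mem_insert.1 hb with rfl | hb
    · exact ⟨c, fun S hS hSk hbS => hc S ((hsub _ le_rfl S hS hbS).trans hTB) hSk⟩
    · obtain ⟨c', hc'⟩ := hT b hb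
      exact ⟨c', fun S hS hSk hbS => hc' S (hsub b (ha_lt b hb).le S hS hbS) hSk hbS⟩

theorem exists_isRamseyBound (k : ℕ) (κ : Type*) [Fintype κ] (s : ℕ) :
    ∃ N, IsRamseyBound.{u} k κ s N := by
  induction k generalizing κ s with
  | zero =>
    exact ⟨s, fun α _ χ A hA => ⟨A, subset_rfl, hA, χ ∅, fun W _ hW => by rw [card_eq_zero.1 hW]⟩⟩
  | succ k ih =>
    classical
    obtain ⟨N, hN⟩ := exists_isMinMonochromatic (ih κ) (Fintype.card κ * s + 1)
    refine ⟨N, fun α _ χ A hA => ?_⟩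
    obtain ⟨T, hTA, hTcard, hT⟩ := hN χ A hA
    have : Nonempty κ := ⟨χ ∅⟩
    choose! c hc using hT
    obtain ⟨q, -, hq⟩ := exists_lt_card_fiber_of_mul_lt_card_of_maps_to (t := univ)
      (f := c) (n := s) (fun _ _ => mem_univ _) (by rw [card_univ, hTcard]; omega)
    refine ⟨{x ∈ T | c x = q}, (filter_subset _ _).trans hTA, hq.le, q, fun W hW hWk => ?_⟩
    have hWne : W.Nonempty := card_pos.1 (by omega)
    set a := W.min' hWne
    have haW : a ∈ W := W.min'_mem hWne
    obtain ⟨haT, rfl⟩ := mem_filter.1 (hW haW)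
    rw [← insert_erase haW]
    refine hc a haT _ ((erase_subset _ _).trans (hW.trans (filter_subset _ _)))
      (by rw [card_erase_of_mem haW, hWk]; rfl) fun b hb => ?_
    exact (W.min'_le b (mem_of_mem_erase hb)).lt_of_ne (ne_of_mem_erase hb).symm

theorem exists_isMonochromatic_subset (k : ℕ) (κ : Type*) [Fintype κ] (s : ℕ) :
    ∃ N, ∀ ⦃α : Type u⦄ (χ : Finset α → κ) (A : Finset α), N ≤ #A →
      ∃ B ⊆ A, #B = s ∧ IsMonochromatic χ k B := by
  obtain ⟨N, hN⟩ := exists_isRamseyBound.{u} k κ s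
  refine ⟨N, fun α χ A hA => ?_⟩
  classical
  let := linearOrderOfSTO (WellOrderingRel (α := α))
  obtain ⟨B, hBA, hsB, c, hc⟩ := hN χ A hA
  obtain ⟨B', hB'B, hB's⟩ := exists_subset_card_eq hsB
  exact ⟨B', hB'B.trans hBA, hB's, c, fun W hW => hc W (hW.trans hB'B)⟩

end Ramsey

section Faces

open Set

variable {X : Type*} [AddCommGroup X] [Module ℝ X] {K F F' s t : Set X}

theorem isFace_self (hK : Convex ℝ K) : IsFace K K :=
  ⟨subset_rfl, hK, fun _ hx _ hy _ _ _ _ => ⟨hx, hy⟩⟩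

theorem isFace_inter_ker (hK : Convex ℝ K) (g : X →ₗ[ℝ] ℝ) (hg : ∀ x ∈ K, 0 ≤ g x) :
    IsFace K (K ∩ LinearMap.ker g) := by
  refine ⟨inter_subset_left, hK.inter (LinearMap.ker g).convex, ?_⟩
  intro x hx y hy α hα hα1 ⟨_, hxy⟩
  have hsum : α * g x + (1 - α) * g y = 0 := by simpa using hxy
  have hgx := hg x hx
  have hgy := hg y hy
  have hgx0 : g x = 0 := by nlinarith
  have hgy0 : g y = 0 := by nlinarith
  exact ⟨⟨hx, hgx0⟩, ⟨hy, hgy0⟩⟩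

/-- Including the apex `0` makes `minFace K ∅` the smallest nonempty face rather than `∅`. -/
def minFace (K s : Set X) : Set X :=
  ⋂₀ {F | IsFace K F ∧ insert 0 s ⊆ F}

theorem insert_zero_subset_minFace : insert 0 s ⊆ minFace K s :=
  fun _ hx _ hF => hF.2 hx

theorem subset_minFace : s ⊆ minFace K s :=
  (subset_insert _ _).trans insert_zero_subset_minFace

theorem zero_mem_minFace : (0 : X) ∈ minFace K s :=
  insert_zero_subset_minFace (mem_insert _ _)

theorem minFace_nonempty : (minFace K s).Nonempty :=
  ⟨0, zero_mem_minFace⟩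

theorem minFace_subset (hF : IsFace K F) (h0 : (0 : X) ∈ F) (hs : s ⊆ F) : minFace K s ⊆ F :=
  sInter_subset_of_mem ⟨hF, insert_subset h0 hs⟩

theorem minFace_mono (h : s ⊆ t) : minFace K s ⊆ minFace K t :=
  fun _ hx F hF => hx F ⟨hF.1, (insert_subset_insert h).trans hF.2⟩

theorem isFace_minFace (hK : Convex ℝ K) (h0 : (0 : X) ∈ K) (hs : s ⊆ K) :
    IsFace K (minFace K s) := by
  refine ⟨minFace_subset (isFace_self hK) h0 hs, convex_sInter fun F hF => hF.1.2.1, ?_⟩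
  intro x hx y hy α hα hα1 hxy
  exact ⟨fun F hF => (hF.1.2.2 hx hy hα hα1 (hxy F hF)).1,
    fun F hF => (hF.1.2.2 hx hy hα hα1 (hxy F hF)).2⟩

theorem minFace_subset_ker (hK : Convex ℝ K) (h0 : (0 : X) ∈ K) {g : X →ₗ[ℝ] ℝ}
    (hg : ∀ x ∈ K, 0 ≤ g x) (hs : s ⊆ K) (hgs : ∀ x ∈ s, g x = 0) :
    minFace K s ⊆ LinearMap.ker g :=
  (minFace_subset (isFace_inter_ker hK g hg) ⟨h0, g.map_zero⟩
    fun x hx => ⟨hs hx, hgs x hx⟩).trans inter_subset_right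

def faceChainLengths (K F : Set X) : Set ℕ :=
  {l | ∃ G : Fin l → Set X, (∀ j, IsFace K (G j) ∧ (G j).Nonempty) ∧
    (∀ j₁ j₂, j₁ < j₂ → G j₁ ⊂ G j₂) ∧ ∀ j, G j ⊆ F}

/-- Junk value `0` when the chain lengths are unbounded. -/
noncomputable def faceHeight (K F : Set X) : ℕ :=
  sSup (faceChainLengths K F)

variable {l : ℕ}

theorem bddAbove_faceChainLengths (hB : FaceChainBound K l) (F : Set X) :
    BddAbove (faceChainLengths K F) :=
  ⟨l, fun _ ⟨G, hG, hGmono, _⟩ => hB _ G hG hGmono⟩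

theorem faceHeight_le (hB : FaceChainBound K l) (F : Set X) : faceHeight K F ≤ l :=
  csSup_le' fun _ ⟨G, hG, hGmono, _⟩ => hB _ G hG hGmono

theorem one_mem_faceChainLengths (hF : IsFace K F) (hne : F.Nonempty) :
    1 ∈ faceChainLengths K F :=
  ⟨fun _ => F, fun _ => ⟨hF, hne⟩, fun j₁ j₂ h => absurd h (Subsingleton.elim j₁ j₂).not_lt,
    fun _ => subset_rfl⟩

theorem one_le_faceHeight (hB : FaceChainBound K l) (hF : IsFace K F) (hne : F.Nonempty) :
    1 ≤ faceHeight K F :=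
  le_csSup (bddAbove_faceChainLengths hB F) (one_mem_faceChainLengths hF hne)

theorem faceHeight_mono (hB : FaceChainBound K l) (h : F ⊆ F') :
    faceHeight K F ≤ faceHeight K F' :=
  csSup_le_csSup' (bddAbove_faceChainLengths hB F')
    fun _ ⟨G, hG, hGmono, hGF⟩ => ⟨G, hG, hGmono, fun j => (hGF j).trans h⟩

theorem faceHeight_add_one_le (hB : FaceChainBound K l) (hF : IsFace K F) (hne : F.Nonempty)
    (hF' : IsFace K F') (h : F ⊂ F') : faceHeight K F + 1 ≤ faceHeight K F' := by
  obtain ⟨G, hG, hGmono, hGF⟩ : faceHeight K F ∈ faceChainLengths K F :=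
    Nat.sSup_mem ⟨1, one_mem_faceChainLengths hF hne⟩ (bddAbove_faceChainLengths hB F)
  refine le_csSup (bddAbove_faceChainLengths hB F')
    ⟨Fin.snoc G F', fun j => ?_, ?_, fun j => ?_⟩
  · cases j using Fin.lastCases <;> simp [hG, hF', hne.mono h.1]
  · intro j₁ j₂ hj
    induction j₂ using Fin.lastCases with
    | last =>
      induction j₁ using Fin.lastCases with
      | last => exact absurd hj (lt_irrefl _)
      | cast i => simpa using (hGF i).trans_ssubset h
    | cast i₂ =>
      induction j₁ using Fin.lastCases with
      | last => exact absurd hj (Fin.castSucc_lt_last i₂).asymm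
      | cast i₁ => simpa using hGmono i₁ i₂ (by simpa using hj)
  · cases j using Fin.lastCases <;> simp [(hGF _).trans h.1]

theorem eq_of_subset_of_faceHeight_le (hB : FaceChainBound K l) (hF : IsFace K F)
    (hne : F.Nonempty) (hF' : IsFace K F') (h : F ⊆ F')
    (hle : faceHeight K F' ≤ faceHeight K F) : F = F' := by
  by_contra hFF'
  have := faceHeight_add_one_le hB hF hne hF' (h.ssubset_of_ne hFF')
  omega

end Faces

section Combinatorics

variable {X ι : Type*} [AddCommGroup X] [Module ℝ X] {K : Set X} {l k : ℕ} {y : ι → X}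

theorem isFace_minFace_image (hK : Convex ℝ K) (h0 : (0 : X) ∈ K) {S : Set ι}
    (hy : ∀ v ∈ S, y v ∈ K) : IsFace K (minFace K (y '' S)) :=
  isFace_minFace hK h0 (Set.image_subset_iff.2 hy)

variable [DecidableEq ι] {U : Finset ι}

theorem exists_faceHeight_minFace_le_erase (hK : Convex ℝ K) (h0 : (0 : X) ∈ K)
    (hB : FaceChainBound K l) (hy : ∀ v ∈ U, y v ∈ K) (hU : l ≤ #U) :
    ∃ a ∈ U,
      faceHeight K (minFace K (y '' U)) ≤ faceHeight K (minFace K (y '' ↑(U.erase a))) := by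
  by_contra! hlt
  have hface : ∀ S ⊆ U, IsFace K (minFace K (y '' S)) :=
    fun S hS => isFace_minFace_image hK h0 fun v hv => hy v (hS hv)
  -- Under `hlt`, no `y a` lies in the face spanned by other points of `U`: that face would
  -- then contain all of `y '' U`.
  have hnotMem : ∀ a ∈ U, ∀ S ⊆ U.erase a, y a ∉ minFace K (y '' S) := by
    intro a ha S hS hya
    refine (hlt a ha).not_ge (faceHeight_mono hB
      (minFace_subset (hface _ (erase_subset _ _)) zero_mem_minFace ?_))
    rintro _ ⟨u, hu, rfl⟩
    by_cases hua : u = a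
    · subst hua
      exact minFace_mono (Set.image_mono (coe_subset.2 hS)) hya
    · exact subset_minFace ⟨u, mem_erase.2 ⟨hua, hu⟩, rfl⟩
  have hchain : ∀ T ⊆ U, faceHeight K (minFace K (y '' ↑(U \ T))) + #T ≤
      faceHeight K (minFace K (y '' U)) := by
    intro T
    induction T using Finset.induction_on with
    | empty => simp
    | insert a T haT ih =>
      intro hT
      have haU : a ∈ U := hT (mem_insert_self a T)
      have hss : minFace K (y '' ↑(U \ insert a T)) ⊂ minFace K (y '' ↑(U \ T)) := by
        refine ⟨minFace_mono (Set.image_mono (coe_subset.2 (sdiff_subset_sdiff subset_rfl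
          (subset_insert a T)))), fun h => hnotMem a haU _ ?_ (h (subset_minFace ⟨a, ?_, rfl⟩))⟩
        · intro x hx
          simp only [mem_sdiff, mem_insert, not_or] at hx
          exact mem_erase.2 ⟨hx.2.1, hx.1⟩
        · simpa using ⟨haU, haT⟩
      have := faceHeight_add_one_le hB (hface _ sdiff_subset) minFace_nonempty
        (hface _ sdiff_subset) hss
      have := ih ((subset_insert a T).trans hT)
      rw [card_insert_of_notMem haT]
      omega
  have h := hchain U subset_rfl
  rw [sdiff_self, bot_eq_empty] at h
  have := one_le_faceHeight hB (hface ∅ (empty_subset _)) minFace_nonempty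
  have := faceHeight_le hB (minFace K (y '' U))
  omega

theorem minFace_image_eq_of_faceHeight_eq (hK : Convex ℝ K) (h0 : (0 : X) ∈ K)
    (hB : FaceChainBound K (k + 1)) (hy : ∀ v ∈ U, y v ∈ K) (hU : #U = k + 1)
    (hheight : ∀ W ⊆ U, #W = k → ∀ W' ⊆ U, #W' = k →
      faceHeight K (minFace K (y '' W)) = faceHeight K (minFace K (y '' W')))
    {W : Finset ι} (hWU : W ⊆ U) (hW : #W = k) :
    minFace K (y '' W) = minFace K (y '' U) := by
  obtain ⟨a, ha, hle⟩ := exists_faceHeight_minFace_le_erase hK h0 hB hy hU.ge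
  refine eq_of_subset_of_faceHeight_le hB
    (isFace_minFace_image hK h0 fun v hv => hy v (hWU hv)) minFace_nonempty
    (isFace_minFace_image hK h0 hy) (minFace_mono (Set.image_mono (coe_subset.2 hWU))) ?_
  rwa [hheight W hWU hW (U.erase a) (erase_subset a U) (by rw [card_erase_of_mem ha, hU]; rfl)]

end Combinatorics

section ConvexCones

variable {E : Type*} [AddCommGroup E] [Module ℝ E] [TopologicalSpace E] {K : Set E}

theorem IsClosedConvexCone.add_mem (hK : IsClosedConvexCone K) {x y : E} (hx : x ∈ K)
    (hy : y ∈ K) : x + y ∈ K := by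
  have h := hK.2.2.2 _ (hK.2.1 hx hy (by norm_num : (0 : ℝ) ≤ 1 / 2)
    (by norm_num : (0 : ℝ) ≤ 1 / 2) (by norm_num)) 2 (by norm_num)
  convert h using 1
  module

def IsClosedConvexCone.toPointedCone (hK : IsClosedConvexCone K) : PointedCone ℝ E where
  carrier := K
  add_mem' := hK.add_mem
  zero_mem' := hK.2.2.1
  smul_mem' c _ hx := hK.2.2.2 _ hx c c.2

end ConvexCones

section Extension

open Filter Topology

variable {E : Type*} [AddCommGroup E] [Module ℝ E] [TopologicalSpace E] [IsTopologicalAddGroup E]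
  [ContinuousSMul ℝ E]

theorem exists_pos_add_smul_mem_of_mem_intrinsicInterior {s : Set E} {x v : E}
    (hx : x ∈ intrinsicInterior ℝ s) (hv : v ∈ vectorSpan ℝ s) :
    ∃ δ : ℝ, 0 < δ ∧ x + δ • v ∈ s := by
  obtain ⟨z, hz, rfl⟩ := mem_intrinsicInterior.1 hx
  have hv' : v ∈ (affineSpan ℝ s).direction := by rwa [direction_affineSpan]
  let q : ℝ → affineSpan ℝ s := fun t => ⟨t • v +ᵥ (z : E),
    (affineSpan ℝ s).vadd_mem_of_mem_direction (Submodule.smul_mem _ t hv') z.2⟩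
  have hq : Continuous q :=
    ((continuous_id.smul continuous_const).add continuous_const).subtype_mk _
  have hq0 : q 0 = z := Subtype.ext (by simp [q])
  have : ∀ᶠ t in 𝓝[>] 0, q t ∈ interior ((↑) ⁻¹' s) :=
    ((hq.tendsto 0).eventually (isOpen_interior.mem_nhds (hq0 ▸ hz))).filter_mono
      nhdsWithin_le_nhds
  obtain ⟨δ, hδs, hδ⟩ := (this.and self_mem_nhdsWithin).exists
  exact ⟨δ, hδ, by simpa [q, add_comm] using interior_subset hδs⟩

theorem PointedCone.exists_smul_add_mem_of_mem_intrinsicInterior {K : PointedCone ℝ E} {x v : E}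
    (hx : x ∈ intrinsicInterior ℝ (K : Set E)) (hv : v ∈ Submodule.span ℝ (K : Set E)) :
    ∃ c : ℝ, c • x + v ∈ K := by
  have hv' : v ∈ vectorSpan ℝ (K : Set E) := by
    simpa [vectorSpan_eq_span_vsub_set_right ℝ K.zero_mem] using hv
  obtain ⟨δ, hδ, hδK⟩ := exists_pos_add_smul_mem_of_mem_intrinsicInterior hx hv'
  refine ⟨δ⁻¹, ?_⟩
  convert K.smul_mem (inv_nonneg.2 hδ.le) hδK using 1
  rw [smul_add, smul_smul, inv_mul_cancel₀ hδ.ne', one_smul]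

theorem PointedCone.exists_extension_nonneg (K : PointedCone ℝ E) (L : Submodule ℝ E)
    (φ : E →ₗ[ℝ] ℝ) (hφ : ∀ x ∈ K, x ∈ L → 0 ≤ φ x)
    (hL : ((L : Set E) ∩ intrinsicInterior ℝ (K : Set E)).Nonempty) :
    ∃ g : E →ₗ[ℝ] ℝ, (∀ x ∈ K, 0 ≤ g x) ∧ ∀ x ∈ L, g x = φ x := by
  obtain ⟨x₀, hx₀L, hx₀⟩ := hL
  obtain ⟨T, hT⟩ := Submodule.exists_isCompl (Submodule.span ℝ (K : Set E) ⊔ L)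
  -- Enlarging `K` to `K + T` makes every translate of `L` meet the cone (the density
  -- hypothesis of `riesz_extension`) without enlarging `K ∩ L`.
  have hnonneg : ∀ x : (φ.toPMap L).domain, (x : E) ∈ K ⊔ (T : PointedCone ℝ E) →
      0 ≤ φ.toPMap L x := by
    rintro ⟨_, hxL⟩ hx
    obtain ⟨p, hp, t, ht, rfl⟩ := Submodule.mem_sup.1 hx
    have htU : t ∈ Submodule.span ℝ (K : Set E) ⊔ L := by
      simpa using Submodule.sub_mem _ (Submodule.mem_sup_right hxL)
        (Submodule.mem_sup_left (Submodule.subset_span hp))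
    obtain rfl : t = 0 := Submodule.disjoint_def.1 hT.disjoint t htU ht
    simpa using hφ p hp (by simpa using hxL)
  have hdense : ∀ y, ∃ x : (φ.toPMap L).domain, (x : E) + y ∈ K ⊔ (T : PointedCone ℝ E) := by
    intro y
    obtain ⟨a, ha, b, hb, rfl⟩ :=
      Submodule.mem_sup.1 (hT.sup_eq_top ▸ Submodule.mem_top (x := y))
    obtain ⟨a₁, ha₁, a₂, ha₂, rfl⟩ := Submodule.mem_sup.1 ha
    obtain ⟨c, hc⟩ := PointedCone.exists_smul_add_mem_of_mem_intrinsicInterior hx₀ ha₁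
    refine ⟨⟨c • x₀ - a₂, L.sub_mem (L.smul_mem c hx₀L) ha₂⟩, ?_⟩
    exact Submodule.mem_sup.2 ⟨_, hc, b, hb, by simp only; abel⟩
  obtain ⟨g, hgφ, hg⟩ := riesz_extension _ _ hnonneg hdense
  exact ⟨g, fun x hx => hg x (Submodule.mem_sup_left hx), fun x hx => hgφ ⟨x, hx⟩⟩

end Extension

section ProductCones

variable {ι : Type*} {E : ι → Type*} [∀ i, AddCommGroup (E i)] [∀ i, Module ℝ (E i)]
  {K : ∀ i, Set (E i)}

theorem IsClosedConvexCone.pi [∀ i, TopologicalSpace (E i)]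
    (hK : ∀ i, IsClosedConvexCone (K i)) : IsClosedConvexCone {x : ∀ i, E i | ∀ i, x i ∈ K i} := by
  refine ⟨?_, fun x hx y hy a b ha hb hab i => (hK i).2.1 (hx i) (hy i) ha hb hab,
    fun i => (hK i).2.2.1, fun x hx t ht i => (hK i).2.2.2 _ (hx i) t ht⟩
  rw [Set.ofPred_forall]
  exact isClosed_iInter fun i => (hK i).1.preimage (continuous_apply i)

variable [Fintype ι] [DecidableEq ι] {β : Type*} {y : β → ∀ i, E i} {S : Set β} {z : ∀ i, E i}

theorem LinearMap.apply_eq_zero_of_forall_mem_minFace (hK : ∀ i, Convex ℝ (K i))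
    (h0 : ∀ i, (0 : E i) ∈ K i) {g : (∀ i, E i) →ₗ[ℝ] ℝ}
    (hg : ∀ x : ∀ i, E i, (∀ i, x i ∈ K i) → 0 ≤ g x) (hyK : ∀ v ∈ S, ∀ i, y v i ∈ K i)
    (hgy : ∀ v ∈ S, g (y v) = 0) (hz : ∀ i, z i ∈ minFace (K i) ((y · i) '' S)) : g z = 0 := by
  let gi : ∀ i, E i →ₗ[ℝ] ℝ := fun i => g ∘ₗ LinearMap.single ℝ E i
  have hsum : ∀ x, g x = ∑ i, gi i (x i) := fun x => by
    simp [gi, ← map_sum, Finset.univ_sum_single]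
  have hgi : ∀ i, ∀ x ∈ K i, 0 ≤ gi i x := fun i x hx => hg _ fun j => by
    by_cases hji : j = i
    · subst hji
      simpa using hx
    · simpa [Pi.single_eq_of_ne hji] using h0 j
  have hyi : ∀ v ∈ S, ∀ i, gi i (y v i) = 0 := fun v hv i =>
    (Finset.sum_eq_zero_iff_of_nonneg fun i _ => hgi i _ (hyK v hv i)).1
      (by rw [← hsum, hgy v hv]) i (Finset.mem_univ i)
  rw [hsum]
  refine Finset.sum_eq_zero fun i _ => minFace_subset_ker (hK i) (h0 i) (hgi i)
    (Set.image_subset_iff.2 fun v hv => hyK v hv i) ?_ (hz i)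
  rintro _ ⟨v, hv, rfl⟩
  exact hyi v hv i

theorem LinearMap.apply_eq_zero_of_forall_mem_minFace_of_lift [∀ i, TopologicalSpace (E i)]
    [∀ i, IsTopologicalAddGroup (E i)] [∀ i, ContinuousSMul ℝ (E i)]
    (hK : ∀ i, IsClosedConvexCone (K i)) {L : Submodule ℝ (∀ i, E i)}
    (hL : ((L : Set (∀ i, E i)) ∩ intrinsicInterior ℝ {x | ∀ i, x i ∈ K i}).Nonempty)
    (φ : (∀ i, E i) →ₗ[ℝ] ℝ) (hφ : ∀ x : ∀ i, E i, (∀ i, x i ∈ K i) → x ∈ L → 0 ≤ φ x)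
    (hyK : ∀ v ∈ S, ∀ i, y v i ∈ K i) (hyL : ∀ v ∈ S, y v ∈ L) (hφy : ∀ v ∈ S, φ (y v) = 0)
    (hzL : z ∈ L) (hz : ∀ i, z i ∈ minFace (K i) ((y · i) '' S)) : φ z = 0 := by
  obtain ⟨g, hg, hgφ⟩ :=
    (IsClosedConvexCone.pi hK).toPointedCone.exists_extension_nonneg L φ hφ hL
  rw [← hgφ z hzL]
  exact g.apply_eq_zero_of_forall_mem_minFace (fun i => (hK i).2.1) (fun i => (hK i).2.2.1) hg
    hyK (fun v hv => (hgφ _ (hyL v hv)).trans (hφy v hv)) hz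

end ProductCones

theorem exists_minFace_image_eq_of_le_card (k : ℕ) (ι : Type*) [Fintype ι] [DecidableEq ι] :
    ∃ N, ∀ ⦃α : Type u⦄ ⦃E : ι → Type v⦄ [∀ i, AddCommGroup (E i)] [∀ i, Module ℝ (E i)]
      ⦃K : ∀ i, Set (E i)⦄, (∀ i, Convex ℝ (K i)) → (∀ i, (0 : E i) ∈ K i) →
      (∀ i, FaceChainBound (K i) (k + 1)) → ∀ (x : α → ∀ i, E i) (A : Finset α),
      (∀ v ∈ A, ∀ i, x v i ∈ K i) → N ≤ #A → ∃ U ⊆ A, #U = k + 1 ∧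
        ∀ i, ∀ W ⊆ U, #W = k → minFace (K i) ((x · i) '' W) = minFace (K i) ((x · i) '' U) := by
  obtain ⟨N, hN⟩ := exists_isMonochromatic_subset.{u} k (ι → Fin (k + 2)) (k + 1)
  refine ⟨N, fun α E _ _ K hK h0 hB x A hx hA => ?_⟩
  classical
  obtain ⟨U, hUA, hUcard, c, hc⟩ := hN
    (fun W i => ⟨faceHeight (K i) (minFace (K i) ((x · i) '' W)),
      Nat.lt_succ_of_le (faceHeight_le (hB i) _)⟩) A hA
  refine ⟨U, hUA, hUcard, fun i W hW hWk => minFace_image_eq_of_faceHeight_eq (hK i) (h0 i)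
    (hB i) (fun v hv => hx v (hUA hv) i) hUcard (fun W hW hWk W' hW' hW'k => ?_) hW hWk⟩
  exact Fin.mk.inj_iff.1 (congrFun ((hc W hW hWk).trans (hc W' hW' hW'k).symm) i)

theorem statement_1_general (k m : ℕ) :
    ∃ N : ℕ, 0 < N ∧
      ∀ (n : ℕ) (d : Fin m → ℕ) (C : Set (EuclideanSpace ℝ (Fin n)))
        (K : ∀ i : Fin m, Set (EuclideanSpace ℝ (Fin (d i)))),
        IsProperCone C →
        (∀ i, IsClosedConvexCone (K i)) →
        (∀ i, FaceChainBound (K i) (k + 1)) →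
        (∃ (π : (∀ i, EuclideanSpace ℝ (Fin (d i))) →ₗ[ℝ] EuclideanSpace ℝ (Fin n))
            (L : Submodule ℝ (∀ i, EuclideanSpace ℝ (Fin (d i)))),
            C = π '' ({x | ∀ i, x i ∈ K i} ∩ (L : Set (∀ i, EuclideanSpace ℝ (Fin (d i))))) ∧
            ((L : Set (∀ i, EuclideanSpace ℝ (Fin (d i)))) ∩
              intrinsicInterior ℝ {x | ∀ i, x i ∈ K i}).Nonempty) →
        ∀ V : Set (EuclideanSpace ℝ (Fin n)), V.Finite → IsNeighborly C k V →
          V.ncard < N := by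
  obtain ⟨N, hN⟩ := exists_minFace_image_eq_of_le_card k (Fin m)
  refine ⟨N + 1, N.succ_pos, fun n d C K _ hK hB ⟨π, L, hC, hL⟩ V hV hVnb => ?_⟩
  classical
  by_contra! hcard
  have hlift : ∀ v ∈ V, ∃ x, (∀ i, x i ∈ K i) ∧ x ∈ L ∧ π x = v := fun v hv => by
    obtain ⟨x, ⟨hxK, hxL⟩, rfl⟩ := hC ▸ (hVnb.1 hv).2.1
    exact ⟨x, hxK, hxL, rfl⟩
  choose! x hxK hxL hπx using hlift
  obtain ⟨U, hUV, hUcard, hface⟩ := hN (fun i => (hK i).2.1) (fun i => (hK i).2.2.1) hB x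
    hV.toFinset (fun v hv => hxK v (hV.mem_toFinset.1 hv))
    (by rw [← Set.ncard_eq_toFinset_card _ hV]; omega)
  replace hUV : ∀ v ∈ U, v ∈ V := fun v hv => hV.mem_toFinset.1 (hUV hv)
  obtain ⟨w, hw⟩ : U.Nonempty := Finset.card_pos.1 (by omega)
  have hWV : ∀ v ∈ U.erase w, v ∈ V := fun v hv => hUV v (Finset.mem_of_mem_erase hv)
  have hWcard : #(U.erase w) = k := by rw [Finset.card_erase_of_mem hw, hUcard]; rfl
  obtain ⟨f, hf, hf0, hfpos⟩ := hVnb.2 (U.erase w : Set _) (fun v hv => hWV v hv)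
    (Finset.finite_toSet _) (by rw [Set.ncard_coe_finset, hWcard])
  have hfw : ⟪f, π (x w)⟫ = 0 :=
    (innerₛₗ ℝ f ∘ₗ π).apply_eq_zero_of_forall_mem_minFace_of_lift hK hL
    (fun y hyK hyL => hf _ (hC ▸ ⟨y, ⟨hyK, hyL⟩, rfl⟩)) (S := ↑(U.erase w))
    (fun v hv => hxK v (hWV v hv)) (fun v hv => hxL v (hWV v hv))
    (fun v hv => by simpa [hπx v (hWV v hv)] using hf0 v hv) (hxL w (hUV w hw))
    fun i => hface i _ (U.erase_subset w) hWcard ▸ subset_minFace ⟨w, hw, rfl⟩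
  rw [hπx w (hUV w hw)] at hfw
  exact (hfpos w ⟨hUV w hw, by simp⟩).ne' hfw

/-- For all positive integers `k` and `m` there is a positive integer `N`
(e.g. the Ramsey number `R_k(k+1; (k+1)^m)`) such that: if a proper convex cone `C` has a proper
`K₁ × ⋯ × Kₘ`-lift where each `Kᵢ` is a closed convex cone with `ℓ(Kᵢ) ≤ k + 1`, and `C` is
`k`-neighborly with respect to a finite set `V` of normalized extreme rays, then `|V| < N`. -/
theorem statement_1 (k m : ℕ) (hk : 0 < k) (hm : 0 < m) :
    ∃ N : ℕ, 0 < N ∧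
      ∀ (n : ℕ) (d : Fin m → ℕ) (C : Set (EuclideanSpace ℝ (Fin n)))
        (K : ∀ i : Fin m, Set (EuclideanSpace ℝ (Fin (d i)))),
        IsProperCone C →
        (∀ i, IsClosedConvexCone (K i)) →
        (∀ i, FaceChainBound (K i) (k + 1)) →
        (∃ (π : (∀ i, EuclideanSpace ℝ (Fin (d i))) →ₗ[ℝ] EuclideanSpace ℝ (Fin n))
            (L : Submodule ℝ (∀ i, EuclideanSpace ℝ (Fin (d i)))),
            C = π '' ({x | ∀ i, x i ∈ K i} ∩ (L : Set (∀ i, EuclideanSpace ℝ (Fin (d i))))) ∧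
            ((L : Set (∀ i, EuclideanSpace ℝ (Fin (d i)))) ∩
              intrinsicInterior ℝ {x | ∀ i, x i ∈ K i}).Nonempty) →
        ∀ V : Set (EuclideanSpace ℝ (Fin n)), V.Finite → IsNeighborly C k V →
          V.ncard < N :=
  statement_1_general k m
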